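/- arXiv:2404.14261 — 3 statements merged into one kernel-verified Lean document; each statement's English description precedes it below -/
import Mathlib

section
/- Let n, k ∈ ℕ and fix any function g : {0,1}^k × {0,1}^k × {0,1}^k → {0,1}. Then the number of functions f : {0,1}^n × {0,1}^n → {0,1} for which there exist f_A : {0,1}^n → {0,1}^k, f_B : {0,1}^n → {0,1}^k and γ ∈ {0,1}^k such that f(x,y) = g(f_A(x), f_B(y), γ) holds for at least (3/4)·2^{2n} of the pairs (x,y) ∈ {0,1}^n × {0,1}^n, is at most 2^{(2^{n+1}+1)·k} · 2^{h(1/4)·2^{2n}}. Equivalently, a uniformly random such f admits such f_A, f_B, γ with probability at most 2^{(2^{n+1}+1)·k} · 2^{(h(1/4)-1)·2^{2n}}. -/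
lemma sum_choose_le_entropy (N : ℕ) :
    ((∑ i ∈ Finset.range (N / 4 + 1), N.choose i : ℕ) : ℝ) ≤
      (4 : ℝ) ^ N * (3 : ℝ) ^ (-(3 * (N : ℝ) / 4)) := by
  set c : ℝ := (3 / 4 : ℝ) ^ N * (3 : ℝ) ^ (-(N : ℝ) / 4) with hc
  have hcpos : 0 < c := by positivity
  have hterm : ∀ i ∈ Finset.range (N / 4 + 1),
      (N.choose i : ℝ) * c ≤ (N.choose i : ℝ) * ((1 / 4 : ℝ) ^ i * (3 / 4 : ℝ) ^ (N - i)) := by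
    intro i hi
    apply mul_le_mul_of_nonneg_left _ (by positivity)
    have hiN : (i : ℝ) ≤ (N : ℝ) / 4 := by
      calc (i : ℝ) ≤ ((N / 4 : ℕ) : ℝ) := by
            exact_mod_cast Nat.lt_succ_iff.mp (Finset.mem_range.mp hi)
        _ ≤ (N : ℝ) / 4 := by exact_mod_cast Nat.cast_div_le
    have hiN' : i ≤ N := le_trans (Nat.lt_succ_iff.mp (Finset.mem_range.mp hi))
      (Nat.div_le_self _ _)
    have h1 : (1 / 4 : ℝ) ^ i * (3 / 4 : ℝ) ^ (N - i) =
        (3 / 4 : ℝ) ^ N * (3 : ℝ) ^ (-(i : ℝ)) := by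
      have hsplit : (3 / 4 : ℝ) ^ N = (3 / 4 : ℝ) ^ (N - i) * (3 / 4 : ℝ) ^ i := by
        rw [← pow_add]; congr 1; omega
      have h3 : (3 : ℝ) ^ (-(i : ℝ)) = ((1 : ℝ) / 3) ^ i := by
        rw [Real.rpow_neg (by norm_num), Real.rpow_natCast]
        simp [one_div]
      rw [hsplit, h3, mul_assoc, ← mul_pow]
      norm_num [mul_comm]
    rw [h1, hc]
    apply mul_le_mul_of_nonneg_left _ (by positivity)
    apply Real.rpow_le_rpow_left_iff (by norm_num : (1:ℝ) < 3) |>.mpr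
    linarith
  have hsum : (∑ i ∈ Finset.range (N / 4 + 1),
      (N.choose i : ℝ) * ((1 / 4 : ℝ) ^ i * (3 / 4 : ℝ) ^ (N - i))) ≤ 1 := by
    have hfull : (∑ i ∈ Finset.range (N + 1),
        (N.choose i : ℝ) * ((1 / 4 : ℝ) ^ i * (3 / 4 : ℝ) ^ (N - i))) = 1 := by
      calc (∑ i ∈ Finset.range (N + 1),
          (N.choose i : ℝ) * ((1 / 4 : ℝ) ^ i * (3 / 4 : ℝ) ^ (N - i)))
          = ((1 / 4 : ℝ) + 3 / 4) ^ N := by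
            rw [add_pow]; apply Finset.sum_congr rfl; intro i _; ring
        _ = 1 := by norm_num
    refine le_of_le_of_eq ?_ hfull
    apply Finset.sum_le_sum_of_subset_of_nonneg
    · exact Finset.range_subset_range.mpr (by omega)
    · intro i _ _; positivity
  have hB : ((∑ i ∈ Finset.range (N / 4 + 1), N.choose i : ℕ) : ℝ) * c ≤ 1 := by
    push_cast
    rw [Finset.sum_mul]
    exact le_trans (Finset.sum_le_sum hterm) hsum
  have hle : ((∑ i ∈ Finset.range (N / 4 + 1), N.choose i : ℕ) : ℝ) ≤ 1 / c :=
    (le_div_iff₀ hcpos).mpr hB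
  refine hle.trans (le_of_eq ?_)
  have hcval : c = (3 : ℝ) ^ (3 * (N : ℝ) / 4) * ((4 : ℝ) ^ N)⁻¹ := by
    rw [hc, div_pow, div_eq_mul_inv, mul_right_comm]
    congr 1
    rw [← Real.rpow_natCast 3 N, ← Real.rpow_add (by norm_num : (0:ℝ) < 3)]
    congr 1; ring
  rw [hcval, one_div, mul_inv, inv_inv, ← Real.rpow_neg (by norm_num : (0:ℝ) ≤ 3),
    mul_comm]


open Finset in
lemma ball_card_le {α : Type*} [Fintype α] [DecidableEq α] (h : α → Bool) :
    (Finset.univ.filter (fun f : α → Bool =>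
        ((3 : ℝ) / 4) * (Fintype.card α) ≤
          ((Finset.univ.filter fun x => f x = h x).card : ℝ))).card ≤
      ∑ i ∈ Finset.range (Fintype.card α / 4 + 1), (Fintype.card α).choose i := by
  classical
  set N := Fintype.card α with hN
  set T : Finset (Finset α) :=
    (Finset.range (N / 4 + 1)).biUnion (fun i => Finset.powersetCard i Finset.univ) with hT
  have hstep : (Finset.univ.filter (fun f : α → Bool =>
      ((3 : ℝ) / 4) * N ≤ ((Finset.univ.filter fun x => f x = h x).card : ℝ))).card ≤ T.card := by
    apply Finset.card_le_card_of_injOn (fun f => Finset.univ.filter (fun x => f x ≠ h x))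
    · intro f hf
      simp only [Finset.mem_coe, Finset.mem_filter, Finset.mem_univ, true_and] at hf
      have hsum : (Finset.univ.filter fun x => f x = h x).card +
          (Finset.univ.filter fun x => ¬ f x = h x).card = N := by
        rw [Finset.card_filter_add_card_filter_not, Finset.card_univ]
      have hD4 : (Finset.univ.filter (fun x => f x ≠ h x)).card * 4 ≤ N := by
        have hcast : ((Finset.univ.filter fun x => f x = h x).card : ℝ) +
            ((Finset.univ.filter (fun x => f x ≠ h x)).card : ℝ) = N := by
          exact_mod_cast hsum
        have : ((Finset.univ.filter (fun x => f x ≠ h x)).card : ℝ) * 4 ≤ (N : ℝ) := by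
          nlinarith [hf, hcast]
        exact_mod_cast this
      have hD : (Finset.univ.filter (fun x => f x ≠ h x)).card ≤ N / 4 :=
        Nat.le_div_iff_mul_le (by norm_num) |>.mpr hD4
      rw [hT]
      apply Finset.mem_biUnion.mpr
      exact ⟨_, Finset.mem_range.mpr (Nat.lt_succ_of_le hD),
        (Finset.mem_powersetCard).mpr ⟨Finset.subset_univ _, rfl⟩⟩
    · intro f _ g _ hfg
      funext x
      have hx := Finset.ext_iff.mp hfg x
      simp only [Finset.mem_filter, Finset.mem_univ, true_and] at hx
      cases hfx : f x <;> cases hgx : g x <;> cases hhx : h x <;> simp_all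
  refine hstep.trans ?_
  refine (Finset.card_biUnion_le).trans ?_
  apply le_of_eq
  apply Finset.sum_congr rfl
  intro i _
  rw [Finset.card_powersetCard, Finset.card_univ]



open Classical in
/-- At most `2^{(2^{n+1}+1)k} · 2^{h(1/4)·2^{2n}}` functions `f : {0,1}^n × {0,1}^n → {0,1}`
admit `f_A, f_B, γ` with `f(x,y) = g(f_A(x), f_B(y), γ)` on at least `3/4` of all pairs;
equivalently, a uniformly random `f` admits such a representation with probability at most
`2^{(2^{n+1}+1)k} · 2^{(h(1/4)-1)·2^{2n}}`, where `h(1/4) = 2 - (3/4)·log₂ 3`. -/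
theorem stmt7 (n k : ℕ)
    (g : (Fin k → Bool) × (Fin k → Bool) × (Fin k → Bool) → Bool) :
    (((Finset.univ.filter (fun f : (Fin n → Bool) × (Fin n → Bool) → Bool =>
        ∃ (fA fB : (Fin n → Bool) → (Fin k → Bool)) (γ : Fin k → Bool),
          ((3 : ℝ) / 4) * 2 ^ (2 * n) ≤
            (((Finset.univ.filter fun xy : (Fin n → Bool) × (Fin n → Bool) =>
              f xy = g (fA xy.1, fB xy.2, γ))).card : ℝ))).card : ℝ) ≤
      (2 : ℝ) ^ ((2 ^ (n + 1) + 1) * k) *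
        (2 : ℝ) ^ ((2 - (3 / 4) * Real.logb 2 3) * 2 ^ (2 * n))) ∧
    (((Finset.univ.filter (fun f : (Fin n → Bool) × (Fin n → Bool) → Bool =>
        ∃ (fA fB : (Fin n → Bool) → (Fin k → Bool)) (γ : Fin k → Bool),
          ((3 : ℝ) / 4) * 2 ^ (2 * n) ≤
            (((Finset.univ.filter fun xy : (Fin n → Bool) × (Fin n → Bool) =>
              f xy = g (fA xy.1, fB xy.2, γ))).card : ℝ))).card : ℝ) / 2 ^ (2 ^ (2 * n)) ≤
      (2 : ℝ) ^ ((2 ^ (n + 1) + 1) * k) *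
        (2 : ℝ) ^ (((2 - (3 / 4) * Real.logb 2 3) - 1) * 2 ^ (2 * n))) := by
  have h1 : (((Finset.univ.filter (fun f : (Fin n → Bool) × (Fin n → Bool) → Bool =>
        ∃ (fA fB : (Fin n → Bool) → (Fin k → Bool)) (γ : Fin k → Bool),
          ((3 : ℝ) / 4) * 2 ^ (2 * n) ≤
            (((Finset.univ.filter fun xy : (Fin n → Bool) × (Fin n → Bool) =>
              f xy = g (fA xy.1, fB xy.2, γ))).card : ℝ))).card : ℝ) ≤
      (2 : ℝ) ^ ((2 ^ (n + 1) + 1) * k) *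
        (2 : ℝ) ^ ((2 - (3 / 4) * Real.logb 2 3) * 2 ^ (2 * n))) := by
    classical
    set α := (Fin n → Bool) × (Fin n → Bool) with hα
    set N : ℕ := 2 ^ (2 * n) with hNdef
    have hcard : Fintype.card α = N := by
      show Fintype.card ((Fin n → Bool) × (Fin n → Bool)) = 2 ^ (2 * n)
      simp only [Fintype.card_prod, Fintype.card_fun, Fintype.card_bool, Fintype.card_fin]
      rw [← pow_add, two_mul]
    -- triple type
    set T := (((Fin n → Bool) → (Fin k → Bool)) × ((Fin n → Bool) → (Fin k → Bool)) ×
      (Fin k → Bool)) with hTdef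
    have hcardT : Fintype.card T = 2 ^ ((2 ^ (n + 1) + 1) * k) := by
      show Fintype.card (((Fin n → Bool) → (Fin k → Bool)) × ((Fin n → Bool) → (Fin k → Bool)) ×
        (Fin k → Bool)) = 2 ^ ((2 ^ (n + 1) + 1) * k)
      simp only [Fintype.card_prod, Fintype.card_fun, Fintype.card_bool, Fintype.card_fin,
        ← pow_mul]
      rw [← pow_add, ← pow_add]
      congr 1
      ring
    set S := (Finset.univ.filter (fun f : α → Bool =>
        ∃ (fA fB : (Fin n → Bool) → (Fin k → Bool)) (γ : Fin k → Bool),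
          ((3 : ℝ) / 4) * 2 ^ (2 * n) ≤
            (((Finset.univ.filter fun xy : α =>
              f xy = g (fA xy.1, fB xy.2, γ))).card : ℝ))) with hS
    have hsub : S ⊆ (Finset.univ : Finset T).biUnion (fun t =>
        Finset.univ.filter (fun f : α → Bool =>
          ((3 : ℝ) / 4) * (N : ℕ) ≤
            ((Finset.univ.filter fun x : α => f x = g (t.1 x.1, t.2.1 x.2, t.2.2)).card : ℝ))) := by
      intro f hf
      rw [hS, Finset.mem_filter] at hf
      obtain ⟨-, fA, fB, γ, hle⟩ := hf
      apply Finset.mem_biUnion.mpr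
      refine ⟨(fA, fB, γ), Finset.mem_univ _, ?_⟩
      rw [Finset.mem_filter]
      refine ⟨Finset.mem_univ _, ?_⟩
      have hNr' : ((N : ℕ) : ℝ) = (2 : ℝ) ^ (2 * n) := by rw [hNdef]; push_cast; ring
      rw [hNr']
      exact hle
    have hball : ∀ t : T, (Finset.univ.filter (fun f : α → Bool =>
        ((3 : ℝ) / 4) * (N : ℕ) ≤
          ((Finset.univ.filter fun x : α => f x = g (t.1 x.1, t.2.1 x.2, t.2.2)).card : ℝ))).card ≤
        ∑ i ∈ Finset.range (N / 4 + 1), N.choose i := by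
      intro t
      have := ball_card_le (α := α) (fun x => g (t.1 x.1, t.2.1 x.2, t.2.2))
      rw [hcard] at this
      exact this
    have hcount : S.card ≤ 2 ^ ((2 ^ (n + 1) + 1) * k) *
        ∑ i ∈ Finset.range (N / 4 + 1), N.choose i := by
      calc S.card ≤ _ := Finset.card_le_card hsub
        _ ≤ ∑ t : T, ∑ i ∈ Finset.range (N / 4 + 1), N.choose i :=
            (Finset.card_biUnion_le).trans (Finset.sum_le_sum fun t _ => hball t)
        _ = Fintype.card T * ∑ i ∈ Finset.range (N / 4 + 1), N.choose i := by
            rw [Finset.sum_const, Finset.card_univ, smul_eq_mul]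
        _ = _ := by rw [hcardT]
    -- real arithmetic
    have hNr : ((N : ℕ) : ℝ) = (2 : ℝ) ^ (2 * n) := by rw [hNdef]; push_cast; ring
    have hrhs : (2 : ℝ) ^ ((2 - (3 / 4) * Real.logb 2 3) * (2:ℝ) ^ (2 * n)) =
        (4 : ℝ) ^ N * (3 : ℝ) ^ (-(3 * (N : ℝ) / 4)) := by
      rw [← hNr]
      have hsplit : (2 - (3 / 4) * Real.logb 2 3) * (N : ℝ) =
          2 * (N : ℝ) + Real.logb 2 3 * (-(3 * (N : ℝ) / 4)) := by ring
      rw [hsplit, Real.rpow_add (by norm_num : (0:ℝ) < 2)]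
      congr 1
      · rw [show (2 : ℝ) * (N : ℝ) = ((2 * N : ℕ) : ℝ) by push_cast; ring,
          Real.rpow_natCast, pow_mul]
        norm_num
      · rw [Real.rpow_mul (by norm_num : (0:ℝ) ≤ 2),
          Real.rpow_logb (by norm_num) (by norm_num) (by norm_num)]
    calc (S.card : ℝ) ≤ ((2 ^ ((2 ^ (n + 1) + 1) * k) *
          ∑ i ∈ Finset.range (N / 4 + 1), N.choose i : ℕ) : ℝ) := by exact_mod_cast hcount
      _ = (2 : ℝ) ^ ((2 ^ (n + 1) + 1) * k) *
          ((∑ i ∈ Finset.range (N / 4 + 1), N.choose i : ℕ) : ℝ) := by push_cast; ring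
      _ ≤ (2 : ℝ) ^ ((2 ^ (n + 1) + 1) * k) *
          ((4 : ℝ) ^ N * (3 : ℝ) ^ (-(3 * (N : ℝ) / 4))) := by
          apply mul_le_mul_of_nonneg_left (sum_choose_le_entropy N) (by positivity)
      _ = _ := by rw [hrhs]

  refine ⟨h1, ?_⟩
  rw [div_le_iff₀ (by positivity : (0:ℝ) < 2 ^ (2 ^ (2 * n)))]
  have e1 : (2 : ℝ) ^ ((2 : ℕ) ^ (2 * n)) = (2 : ℝ) ^ ((2 : ℝ) ^ (2 * n)) := by
    rw [← Real.rpow_natCast (2 : ℝ) (2 ^ (2 * n))]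
    congr 1
    push_cast
    ring
  rw [mul_assoc, e1, ← Real.rpow_add (by norm_num : (0:ℝ) < 2)]
  have e2 : (2 - 3 / 4 * Real.logb 2 3 - 1) * (2 : ℝ) ^ (2 * n) + (2 : ℝ) ^ (2 * n) =
      (2 - 3 / 4 * Real.logb 2 3) * (2 : ℝ) ^ (2 * n) := by ring
  rw [e2]
  exact h1
end

section
/- Let m₀, n, q ∈ ℕ satisfy n > 2·(m₀ + 5) and q ≤ n/2 - m₀ - 5, and set k = 12·2^{2q+2m₀}. Then (2^{n+1}+1)·k + h(1/4)·2^{2n} ≤ 2^{2n} - 2^n, where h(1/4) = 2 - (3/4)·log₂ 3. Consequently 2^{(2^{n+1}+1)·k} · 2^{(h(1/4)-1)·2^{2n}} ≤ 2^{-2^n}. -/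
/-- With rounding size `k = 12·2^{2q+2m₀}`, if `n > 2(m₀+5)` and `q ≤ n/2 - m₀ - 5`, then
`(2^{n+1}+1)k + h(1/4)·2^{2n} ≤ 2^{2n} - 2^n`, and consequently
`2^{(2^{n+1}+1)k} · 2^{(h(1/4)-1)·2^{2n}} ≤ 2^{-2^n}`, where `h(1/4) = 2 - (3/4)·log₂ 3`. -/
theorem stmt8 (m₀ n q : ℕ) (hn : 2 * (m₀ + 5) < n)
    (hq : (q : ℝ) ≤ (n : ℝ) / 2 - (m₀ : ℝ) - 5)
    (k : ℕ) (hk : k = 12 * 2 ^ (2 * q + 2 * m₀)) :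
    ((((2 : ℝ) ^ (n + 1) + 1) * k + (2 - (3 / 4) * Real.logb 2 3) * 2 ^ (2 * n)) ≤
      (2 : ℝ) ^ (2 * n) - 2 ^ n) ∧
    ((2 : ℝ) ^ ((2 ^ (n + 1) + 1) * k) *
        (2 : ℝ) ^ (((2 - (3 / 4) * Real.logb 2 3) - 1) * 2 ^ (2 * n)) ≤
      (2 : ℝ) ^ (-((2 : ℝ) ^ n))) := by
  have hlog : (3 / 2 : ℝ) ≤ Real.logb 2 3 := by
    rw [Real.le_logb_iff_rpow_le (by norm_num) (by norm_num)]
    have hsq : ((2 : ℝ) ^ ((3 : ℝ) / 2)) ^ 2 = 8 := by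
      rw [← Real.rpow_natCast ((2 : ℝ) ^ ((3 : ℝ) / 2)) 2,
        ← Real.rpow_mul (by norm_num : (0:ℝ) ≤ 2)]
      norm_num
    nlinarith [Real.rpow_nonneg (by norm_num : (0:ℝ) ≤ 2) ((3:ℝ)/2)]
  -- exponent inequality in ℕ
  have hexp : 2 * q + 2 * m₀ + 10 ≤ n := by
    have : (2 * q + 2 * m₀ + 10 : ℝ) ≤ (n : ℝ) := by linarith
    exact_mod_cast this
  have hn11 : 11 ≤ n := by omega
  have hx : (2048 : ℝ) ≤ (2 : ℝ) ^ n := by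
    calc (2048 : ℝ) = 2 ^ 11 := by norm_num
    _ ≤ 2 ^ n := by
        exact pow_le_pow_right₀ (by norm_num) hn11
  have hkle : (k : ℝ) ≤ 3 / 256 * (2 : ℝ) ^ n := by
    have h1 : (2 : ℝ) ^ (2 * q + 2 * m₀ + 10) ≤ (2 : ℝ) ^ n :=
      pow_le_pow_right₀ (by norm_num) hexp
    have h2 : (2 : ℝ) ^ (2 * q + 2 * m₀ + 10) = (2 : ℝ) ^ (2 * q + 2 * m₀) * 1024 := by
      rw [pow_add]; norm_num
    rw [hk]
    push_cast
    nlinarith [pow_nonneg (by norm_num : (0:ℝ) ≤ 2) (2 * q + 2 * m₀)]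
  have h2n : (2 : ℝ) ^ (2 * n) = (2 : ℝ) ^ n * (2 : ℝ) ^ n := by
    rw [two_mul, pow_add]
  have hkpos : (0 : ℝ) ≤ (k : ℝ) := Nat.cast_nonneg k
  have part1 : (((2 : ℝ) ^ (n + 1) + 1) * k + (2 - (3 / 4) * Real.logb 2 3) * 2 ^ (2 * n)) ≤
      (2 : ℝ) ^ (2 * n) - 2 ^ n := by
    have hpow : (2 : ℝ) ^ (n + 1) + 1 ≤ 3 * (2 : ℝ) ^ n := by
      rw [pow_succ]; nlinarith
    rw [h2n]
    nlinarith [mul_le_mul hpow hkle hkpos (by positivity : (0:ℝ) ≤ 3 * (2:ℝ)^n),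
      sq_nonneg ((2:ℝ) ^ n)]
  refine ⟨part1, ?_⟩
  rw [← Real.rpow_natCast 2 ((2 ^ (n + 1) + 1) * k), ← Real.rpow_add (by norm_num : (0:ℝ) < 2)]
  apply (Real.rpow_le_rpow_left_iff (by norm_num : (1:ℝ) < 2)).mpr
  push_cast
  linarith
end

section
/- Let X be a real random variable with probability density f : ℝ → ℝ such that f·ln f is integrable and X has finite second moment. Then for every constant c ∈ ℝ, E[(X - c)²] = ∫ (x - c)²·f(x) dx ≥ (1/(2πe)) · exp( 2·h_nats(X) ), where h_nats(X) = -∫ f(x)·ln f(x) dx is the differential entropy in natural units. Moreover, if X is Gaussian and c is its mean, equality holds. -/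
open MeasureTheory ProbabilityTheory Real Filter


lemma integrable_sq_mul_exp {b : ℝ} (hb : 0 < b) :
    Integrable (fun x : ℝ => x ^ 2 * Real.exp (-b * x ^ 2)) := by
  have := integrable_rpow_mul_exp_neg_mul_sq hb (s := 2) (by norm_num)
  refine this.congr (ae_of_all _ fun x => ?_)
  norm_num [Real.rpow_natCast]

lemma int_sq_exp {b : ℝ} (hb : 0 < b) :
    ∫ x : ℝ, x ^ 2 * Real.exp (-b * x ^ 2) = (1 / (2 * b)) * Real.sqrt (π / b) := by
  have hu : ∀ x : ℝ, HasDerivAt (fun x : ℝ => x) 1 x := fun x => hasDerivAt_id x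
  have hv : ∀ x : ℝ, HasDerivAt (fun x : ℝ => -(1/(2*b)) * Real.exp (-b * x ^ 2))
      (x * Real.exp (-b * x ^ 2)) x := by
    intro x
    have h1 : HasDerivAt (fun x : ℝ => -b * x ^ 2) (-b * (2 * x)) x := by
      simpa using ((hasDerivAt_pow 2 x).const_mul (-b))
    have h2 := (h1.exp).const_mul (-(1/(2*b)))
    refine h2.congr_deriv ?_
    field_simp
  have huv' : Integrable ((fun x : ℝ => x) * fun x => x * Real.exp (-b * x ^ 2)) := by
    refine (integrable_sq_mul_exp hb).congr (ae_of_all _ fun x => ?_)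
    simp [Pi.mul_apply]; ring
  have hu'v : Integrable ((fun _ : ℝ => (1:ℝ)) * fun x => -(1/(2*b)) * Real.exp (-b * x ^ 2)) := by
    have := (integrable_exp_neg_mul_sq hb).const_mul (-(1/(2*b)))
    exact this.congr (ae_of_all _ fun x => by simp [Pi.mul_apply])
  have huv : Integrable ((fun x : ℝ => x) * fun x => -(1/(2*b)) * Real.exp (-b * x ^ 2)) := by
    have := (integrable_mul_exp_neg_mul_sq hb).const_mul (-(1/(2*b)))
    refine this.congr (ae_of_all _ fun x => ?_)
    simp [Pi.mul_apply]; ring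
  have key := integral_mul_deriv_eq_deriv_mul_of_integrable (fun x _ => hu x) (fun x _ => hv x) huv' hu'v huv
  have h2 : ∫ x : ℝ, x * (x * Real.exp (-b * x ^ 2)) = ∫ x : ℝ, x ^ 2 * Real.exp (-b * x ^ 2) := by
    congr 1; ext x; ring
  rw [h2] at key
  rw [key]
  simp only [one_mul, neg_mul, integral_neg, neg_neg]
  rw [integral_const_mul]
  rw [show (fun a : ℝ => rexp (-(b * a ^ 2))) = fun a : ℝ => rexp (-b * a ^ 2) by ext a; ring_nf]
  rw [integral_gaussian]

noncomputable def gfun (c S : ℝ) : ℝ → ℝ :=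
  fun x => (Real.sqrt (2 * π * S))⁻¹ * Real.exp (-(x - c) ^ 2 / (2 * S))

variable {c S : ℝ}

lemma gfun_pos (hS : 0 < S) (x : ℝ) : 0 < gfun c S x := by
  unfold gfun
  have : (0:ℝ) < 2 * π * S := by positivity
  positivity

lemma gfun_exp_eq (hS : 0 < S) (x : ℝ) :
    Real.exp (-(x - c) ^ 2 / (2 * S)) = Real.exp (-(2*S)⁻¹ * (x - c) ^ 2) := by
  congr 1; field_simp

lemma gfun_integrable (hS : 0 < S) : Integrable (gfun c S) := by
  have hb : (0:ℝ) < (2*S)⁻¹ := by positivity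
  have := ((integrable_exp_neg_mul_sq hb).comp_sub_right c).const_mul (Real.sqrt (2 * π * S))⁻¹
  refine this.congr (ae_of_all _ fun x => ?_)
  unfold gfun
  simp only [gfun_exp_eq hS]

lemma integral_gfun (hS : 0 < S) : ∫ x, gfun c S x = 1 := by
  unfold gfun
  have hb : (0:ℝ) < (2*S)⁻¹ := by positivity
  calc ∫ x, (Real.sqrt (2 * π * S))⁻¹ * Real.exp (-(x - c) ^ 2 / (2 * S))
      = (Real.sqrt (2 * π * S))⁻¹ * ∫ x, Real.exp (-(2*S)⁻¹ * (x - c) ^ 2) := by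
        rw [← integral_const_mul]; exact integral_congr_ae (ae_of_all _ fun x => by simp only [gfun_exp_eq hS])
    _ = (Real.sqrt (2 * π * S))⁻¹ * ∫ x, Real.exp (-(2*S)⁻¹ * x ^ 2) := by
        rw [integral_sub_right_eq_self (μ := volume) (fun y => Real.exp (-(2*S)⁻¹ * y ^ 2)) c]
    _ = (Real.sqrt (2 * π * S))⁻¹ * Real.sqrt (π / (2*S)⁻¹) := by rw [integral_gaussian]
    _ = 1 := by
        rw [show π / (2*S)⁻¹ = 2 * π * S by field_simp]
        rw [inv_mul_cancel₀]
        positivity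

lemma sq_gfun_integrable (hS : 0 < S) : Integrable (fun x => (x - c) ^ 2 * gfun c S x) := by
  have hb : (0:ℝ) < (2*S)⁻¹ := by positivity
  have := ((integrable_sq_mul_exp hb).comp_sub_right c).const_mul (Real.sqrt (2 * π * S))⁻¹
  refine this.congr (ae_of_all _ fun x => ?_)
  unfold gfun
  simp only [gfun_exp_eq hS]; ring

lemma integral_sq_gfun (hS : 0 < S) : ∫ x, (x - c) ^ 2 * gfun c S x = S := by
  unfold gfun
  have hb : (0:ℝ) < (2*S)⁻¹ := by positivity
  have h2 : Real.sqrt (π / (2*S)⁻¹) = Real.sqrt (2 * π * S) := by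
    rw [show π / (2*S)⁻¹ = 2 * π * S by field_simp]
  calc ∫ x, (x - c) ^ 2 * ((Real.sqrt (2 * π * S))⁻¹ * Real.exp (-(x - c) ^ 2 / (2 * S)))
      = (Real.sqrt (2 * π * S))⁻¹ * ∫ x, (x - c) ^ 2 * Real.exp (-(2*S)⁻¹ * (x - c) ^ 2) := by
        rw [← integral_const_mul]
        exact integral_congr_ae (ae_of_all _ fun x => by simp only [gfun_exp_eq hS]; ring)
    _ = (Real.sqrt (2 * π * S))⁻¹ * ∫ x, x ^ 2 * Real.exp (-(2*S)⁻¹ * x ^ 2) := by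
        rw [integral_sub_right_eq_self (μ := volume) (fun y => y ^ 2 * Real.exp (-(2*S)⁻¹ * y ^ 2)) c]
    _ = (Real.sqrt (2 * π * S))⁻¹ * ((1 / (2 * (2*S)⁻¹)) * Real.sqrt (π / (2*S)⁻¹)) := by
        rw [int_sq_exp hb]
    _ = S := by
        rw [h2, show (1 / (2 * (2*S)⁻¹)) = S by field_simp]
        rw [mul_comm S, mul_assoc, mul_comm _ S, ← mul_assoc, inv_mul_cancel₀, one_mul]
        positivity

lemma log_gfun (hS : 0 < S) (x : ℝ) :
    Real.log (gfun c S x) = -(1/2 * Real.log (2 * π * S)) - (x - c) ^ 2 / (2 * S) := by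
  unfold gfun
  have h1 : (0:ℝ) < 2 * π * S := by positivity
  rw [Real.log_mul (by positivity) (Real.exp_ne_zero _), Real.log_inv, Real.log_exp,
    Real.log_sqrt h1.le]
  ring

lemma flog_gfun_integrable (hS : 0 < S) {f : ℝ → ℝ}
    (hfi : Integrable f) (hc2 : Integrable fun x => (x - c) ^ 2 * f x) :
    Integrable (fun x => f x * Real.log (gfun c S x)) := by
  have h1 := (hfi.const_mul (-(1/2 * Real.log (2 * π * S))))
  have h2 := hc2.const_mul (2 * S)⁻¹
  refine (h1.sub h2).congr (ae_of_all _ fun x => ?_)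
  simp only [Pi.sub_apply]
  rw [log_gfun hS]
  field_simp

lemma gibbs (hS : 0 < S) {f : ℝ → ℝ} (hf0 : ∀ x, 0 ≤ f x)
    (hf1 : (∫ x, f x) = 1)
    (hlog : Integrable (fun x => f x * Real.log (f x)))
    (hfi : Integrable f) (hc2 : Integrable fun x => (x - c) ^ 2 * f x)
    (hSdef : S = ∫ x, (x - c) ^ 2 * f x) :
    -∫ x, f x * Real.log (f x) ≤ 1/2 + 1/2 * Real.log (2 * π * S) := by
  have hGlog := flog_gfun_integrable (c := c) hS hfi hc2
  -- pointwise inequality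
  have hpt : ∀ x, f x - gfun c S x ≤ f x * Real.log (f x) - f x * Real.log (gfun c S x) := by
    intro x
    rcases eq_or_lt_of_le (hf0 x) with h | h
    · rw [← h]
      simp
      exact (gfun_pos hS x).le
    · have hg := gfun_pos (c := c) hS x
      have hq : 0 < gfun c S x / f x := by positivity
      have := Real.log_le_sub_one_of_pos hq
      rw [Real.log_div hg.ne' h.ne'] at this
      have h2 : f x * (Real.log (gfun c S x) - Real.log (f x)) ≤
          f x * (gfun c S x / f x - 1) := by
        exact mul_le_mul_of_nonneg_left this h.le
      rw [mul_sub, mul_sub, mul_div_cancel₀ _ h.ne', mul_one] at h2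
      linarith
  have hmono : ∫ x, (f x - gfun c S x) ≤
      ∫ x, (f x * Real.log (f x) - f x * Real.log (gfun c S x)) :=
    integral_mono (hfi.sub (gfun_integrable hS)) (hlog.sub hGlog) hpt
  rw [integral_sub hfi (gfun_integrable hS), hf1, integral_gfun hS, sub_self,
    integral_sub hlog hGlog] at hmono
  -- compute ∫ f log g
  have hcomp : ∫ x, f x * Real.log (gfun c S x)
      = -(1/2 * Real.log (2 * π * S)) - 1/2 := by
    have : ∀ x, f x * Real.log (gfun c S x)
        = (-(1/2 * Real.log (2 * π * S))) * f x - (2 * S)⁻¹ * ((x - c) ^ 2 * f x) := by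
      intro x
      rw [log_gfun hS]
      field_simp
    rw [integral_congr_ae (ae_of_all _ this),
      integral_sub ((hfi.const_mul _)) (hc2.const_mul _),
      integral_const_mul, integral_const_mul, hf1, ← hSdef]
    field_simp
  rw [hcomp] at hmono
  linarith


/-- Fano-type estimation inequality with a constant estimator: for a real random variable
with density `f`, `E[(X-c)²] = ∫ (x-c)²·f(x) dx ≥ (1/(2πe))·exp(2·h_nats(X))`, where
`h_nats(X) = -∫ f ln f`; with equality for a Gaussian and `c` its mean. -/
theorem stmt13 (f : ℝ → ℝ) (hf0 : ∀ x, 0 ≤ f x) (hfm : Measurable f)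
    (hf1 : (∫ x, f x) = 1)
    (hlog : Integrable (fun x => f x * Real.log (f x)))
    (hmom : Integrable (fun x => x ^ 2 * f x)) :
    (∀ c : ℝ,
      (1 / (2 * Real.pi * Real.exp 1)) * Real.exp (2 * (-∫ x, f x * Real.log (f x))) ≤
        ∫ x, (x - c) ^ 2 * f x) ∧
    (∀ (μ : ℝ) (v : NNReal), v ≠ 0 →
      (∫ x, (x - μ) ^ 2 * gaussianPDFReal μ v x) =
        (1 / (2 * Real.pi * Real.exp 1)) *
          Real.exp (2 * (-∫ x, gaussianPDFReal μ v x * Real.log (gaussianPDFReal μ v x)))) := by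
  have hfi : Integrable f := by
    by_contra h
    rw [integral_undef h] at hf1
    norm_num at hf1
  have hxf : Integrable (fun x => x * f x) := by
    refine (hmom.add hfi).mono' ((measurable_id.mul hfm).aestronglyMeasurable)
      (ae_of_all _ fun x => ?_)
    simp only [Pi.add_apply, norm_mul, Real.norm_eq_abs, abs_of_nonneg (hf0 x)]
    have h1 : |x| ≤ x ^ 2 + 1 := by nlinarith [abs_nonneg x, sq_abs x, sq_nonneg (|x| - 1)]
    nlinarith [mul_le_mul_of_nonneg_right h1 (hf0 x)]
  constructor
  · intro c
    have hc2 : Integrable (fun x => (x - c) ^ 2 * f x) := by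
      have := (hmom.sub (hxf.const_mul (2 * c))).add (hfi.const_mul (c ^ 2))
      refine this.congr (ae_of_all _ fun x => ?_)
      simp only [Pi.add_apply, Pi.sub_apply]
      ring
    set S := ∫ x, (x - c) ^ 2 * f x with hSdef
    have hS0 : 0 ≤ S := integral_nonneg fun x => mul_nonneg (sq_nonneg _) (hf0 x)
    have hSpos : 0 < S := by
      rcases hS0.lt_or_eq with h | h
      · exact h
      · exfalso
        have hz : (fun x => (x - c) ^ 2 * f x) =ᵐ[volume] 0 :=
          (integral_eq_zero_iff_of_nonneg (fun x => mul_nonneg (sq_nonneg _) (hf0 x)) hc2).mp h.symm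
        have hne : ∀ᵐ x : ℝ, x ≠ c := by
          rw [ae_iff]
          convert (measure_singleton c : (volume : Measure ℝ) {c} = 0) using 2
          ext x
          simp
        have hf0' : f =ᵐ[volume] 0 := by
          filter_upwards [hz, hne] with x h1 h2
          have : (x - c) ^ 2 ≠ 0 := by
            intro hcon
            exact h2 (by nlinarith [sq_nonneg (x - c)])
          simpa [this] using h1
        rw [integral_congr_ae hf0'] at hf1
        simp at hf1
    have hg := gibbs hSpos hf0 hf1 hlog hfi hc2 hSdef
    have e1 : Real.exp (2 * (-∫ x, f x * Real.log (f x))) ≤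
        Real.exp (1 + Real.log (2 * π * S)) := Real.exp_le_exp.mpr (by linarith)
    rw [Real.exp_add, Real.exp_log (by positivity)] at e1
    calc (1 / (2 * π * Real.exp 1)) * Real.exp (2 * (-∫ x, f x * Real.log (f x)))
        ≤ (1 / (2 * π * Real.exp 1)) * (Real.exp 1 * (2 * π * S)) := by
          exact mul_le_mul_of_nonneg_left e1 (by positivity)
      _ = S := by
          have := Real.exp_ne_zero 1
          have hπ := Real.pi_ne_zero
          field_simp
  · intro μ v hv
    set S : ℝ := (v : ℝ) with hSd
    have hSpos : 0 < S := by
      simp only [hSd]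
      exact_mod_cast pos_iff_ne_zero.mpr hv
    have hgf : gaussianPDFReal μ v = gfun μ S := rfl
    rw [hgf, integral_sq_gfun hSpos]
    have hcomp : ∫ x, gfun μ S x * Real.log (gfun μ S x)
        = -(1/2 * Real.log (2 * π * S)) - 1/2 := by
      have hpw : ∀ x, gfun μ S x * Real.log (gfun μ S x)
          = (-(1/2 * Real.log (2 * π * S))) * gfun μ S x
            - (2 * S)⁻¹ * ((x - μ) ^ 2 * gfun μ S x) := by
        intro x
        rw [log_gfun hSpos]
        field_simp
      rw [integral_congr_ae (ae_of_all _ hpw),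
        integral_sub ((gfun_integrable hSpos).const_mul _)
          ((sq_gfun_integrable hSpos).const_mul _),
        integral_const_mul, integral_const_mul, integral_gfun hSpos, integral_sq_gfun hSpos]
      field_simp
    rw [hcomp]
    have h2 : 2 * (-(-(1/2 * Real.log (2 * π * S)) - 1/2)) = Real.log (2 * π * S) + 1 := by ring
    rw [h2, Real.exp_add, Real.exp_log (by positivity)]
    have := Real.exp_ne_zero 1
    have hπ := Real.pi_ne_zero
    field_simp
end
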